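/- arXiv:2209.02740 — 3 statements merged into one kernel-verified Lean document; each statement's English description precedes it below -/
import Mathlib

section
/- Formal inversion of a near-identity polynomial transformation: Suppose w_k = z_k - α P_k(z) for k = 1,...,n, where each P_k is a polynomial of lower degree at least d ≥ 2. Then z can be expressed as a formal power series in α: z_k = w_k + α P_k(w) + α^2 R_{k,2}(w) + α^3 R_{k,3}(w) + ..., where each R_{k,t} is a polynomial of lower degree at least (d-1)t + 1. -/
open MvPolynomial Complex

abbrev PolyN (n : ℕ) := MvPolynomial (Fin n ⊕ Fin n) ℂ

/-- Conjugate polynomial: conjugate coefficients and swap each variable `z_j` with `z̄_j`. -/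
noncomputable def conjP {n : ℕ} (R : PolyN n) : PolyN n :=
  MvPolynomial.map (starRingEnd ℂ) (rename Sum.swap R)

/-- The bracket `[R‖S]`: formal derivative of `R` along `ż_j = S_j`, `ż̄_j = conj (S_j)`. -/
noncomputable def bracket {n : ℕ} (R : PolyN n) (S : Fin n → PolyN n) : PolyN n :=
  ∑ j : Fin n, (pderiv (Sum.inl j) R * S j + pderiv (Sum.inr j) R * conjP (S j))

/-- Total degree of a monomial exponent. -/
def mdeg {σ : Type*} (m : σ →₀ ℕ) : ℕ := m.sum fun _ e => e

/-! The inverse is the fixed point of `z = w + α P(z)`. Its `α^(s+1)`-coefficient is the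
`α^s`-coefficient of `P(z)`, which involves only the coefficients of `z` up to `α^s`; this defines
the coefficients recursively. For the degree bound, let `I` be the ideal generated by the variables
and say that a series in `α` has weight `c` if its `α^s`-coefficient lies in `I^((d-1)s + c)`.
Weights add under multiplication, so if `z` has weight `1` then `P(z)` has weight `d`, and the
shift by one power of `α` brings `α P(z)` back to weight `d - (d - 1) = 1`. -/

open scoped PowerSeries

section CoeffMemPow

variable {A : Type*} [CommSemiring A] {I : Ideal A} {a b c : ℕ} {f g : A⟦X⟧}

def CoeffMemPow (I : Ideal A) (a c : ℕ) (f : A⟦X⟧) : Prop :=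
  ∀ s, PowerSeries.coeff s f ∈ I ^ (a * s + c)

theorem CoeffMemPow.mono (hf : CoeffMemPow I a c f) (hbc : b ≤ c) : CoeffMemPow I a b f :=
  fun s => Ideal.pow_le_pow_right (by omega) (hf s)

theorem CoeffMemPow.sum {ι : Type*} {t : Finset ι} {F : ι → A⟦X⟧}
    (hF : ∀ i ∈ t, CoeffMemPow I a c (F i)) : CoeffMemPow I a c (∑ i ∈ t, F i) :=
  fun s => by rw [map_sum]; exact Ideal.sum_mem _ fun i hi => hF i hi s

theorem CoeffMemPow.mul (hf : CoeffMemPow I a b f) (hg : CoeffMemPow I a c g) :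
    CoeffMemPow I a (b + c) (f * g) := by
  intro s
  rw [PowerSeries.coeff_mul]
  refine Ideal.sum_mem _ fun p hp => ?_
  have hs : a * s + (b + c) = (a * p.1 + b) + (a * p.2 + c) := by
    rw [← Finset.HasAntidiagonal.mem_antidiagonal.mp hp]; ring
  rw [hs, pow_add]
  exact Ideal.mul_mem_mul (hf p.1) (hg p.2)

theorem coeffMemPow_C {x : A} (hx : x ∈ I ^ c) : CoeffMemPow I a c (PowerSeries.C x) := by
  intro s
  rw [PowerSeries.coeff_C]
  split_ifs with hs
  · simpa [hs] using hx
  · exact zero_mem _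

theorem coeffMemPow_one : CoeffMemPow I a 0 1 :=
  coeffMemPow_C (by simp)

theorem CoeffMemPow.pow (hf : CoeffMemPow I a c f) (e : ℕ) : CoeffMemPow I a (c * e) (f ^ e) := by
  induction e with
  | zero => simpa using coeffMemPow_one
  | succ e ih => simpa [pow_succ, mul_add] using ih.mul hf

theorem CoeffMemPow.prod {ι : Type*} {t : Finset ι} {F : ι → A⟦X⟧} {C : ι → ℕ}
    (hF : ∀ i ∈ t, CoeffMemPow I a (C i) (F i)) :
    CoeffMemPow I a (∑ i ∈ t, C i) (∏ i ∈ t, F i) := by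
  classical
  induction t using Finset.induction_on with
  | empty => simpa using coeffMemPow_one
  | insert i t hi ih =>
    rw [Finset.prod_insert hi, Finset.sum_insert hi]
    exact (hF i (t.mem_insert_self i)).mul (ih fun j hj => hF j (Finset.mem_insert_of_mem hj))

variable {σ R : Type*} [CommSemiring R] [Algebra R A]

theorem coeffMemPow_aeval {F : σ → A⟦X⟧} (hF : ∀ v, CoeffMemPow I a 1 (F v))
    {p : MvPolynomial σ R} {D : ℕ} (hp : p ∈ idealOfVars σ R ^ D) :
    CoeffMemPow I a D (aeval F p) := by
  rw [p.as_sum, map_sum]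
  refine CoeffMemPow.sum fun m hm => ?_
  rw [aeval_monomial, PowerSeries.algebraMap_apply]
  have hmon : CoeffMemPow I a m.degree (m.prod fun v k => F v ^ k) :=
    CoeffMemPow.prod fun v _ => by simpa using (hF v).pow (m v)
  have hcoeff : CoeffMemPow I a 0 (PowerSeries.C (algebraMap R A (coeff m p))) :=
    coeffMemPow_C (by simp)
  exact (zero_add m.degree ▸ hcoeff.mul hmon).mono ((mem_pow_idealOfVars_iff D p).1 hp m hm)

end CoeffMemPow

section FormalInverse

variable {σ R A : Type*} [CommSemiring R] [CommSemiring A] [Algebra R A]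

theorem coeff_aeval_eq_of_coeff_eq {F G : σ → A⟦X⟧} {s : ℕ}
    (hFG : ∀ v, ∀ i ≤ s, PowerSeries.coeff i (F v) = PowerSeries.coeff i (G v))
    (p : MvPolynomial σ R) :
    ∀ i ≤ s, PowerSeries.coeff i (aeval F p) = PowerSeries.coeff i (aeval G p) := by
  induction p using MvPolynomial.induction_on with
  | C r => simp
  | add p q hp hq => intro i hi; simp only [map_add, hp i hi, hq i hi]
  | mul_X p v hp =>
    intro i hi
    simp only [map_mul, aeval_X, PowerSeries.coeff_mul]
    refine Finset.sum_congr rfl fun j hj => ?_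
    have hj' := Finset.HasAntidiagonal.mem_antidiagonal.mp hj
    rw [hp j.1 (by omega), hFG v j.2 (by omega)]

-- The truncation at `i ≤ s` makes the recursion well founded; by `coeff_aeval_eq_of_coeff_eq` it
-- does not change the coefficient.
noncomputable def formalInverseCoeff (x : σ → A) (Q : σ → MvPolynomial σ R) :
    ℕ → σ → A
  | 0 => x
  | s + 1 => fun v => PowerSeries.coeff s <| aeval
      (fun u => PowerSeries.mk fun i => if i ≤ s then formalInverseCoeff x Q i u else 0) (Q v)

noncomputable abbrev formalInverseSeries (x : σ → A) (Q : σ → MvPolynomial σ R) (v : σ) :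
    A⟦X⟧ :=
  PowerSeries.mk fun t => formalInverseCoeff x Q t v

variable (x : σ → A) (Q : σ → MvPolynomial σ R)

theorem formalInverseSeries_eq (v : σ) :
    formalInverseSeries x Q v =
      PowerSeries.C (x v) + PowerSeries.X * aeval (formalInverseSeries x Q) (Q v) := by
  ext (_ | s)
  · simp [formalInverseCoeff]
  · rw [PowerSeries.coeff_mk, map_add, PowerSeries.coeff_succ_X_mul, PowerSeries.coeff_C,
      if_neg s.succ_ne_zero, zero_add, formalInverseCoeff]
    refine coeff_aeval_eq_of_coeff_eq (fun u i hi => ?_) (Q v) s le_rfl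
    simp [hi]

theorem formalInverseCoeff_one (v : σ) : formalInverseCoeff x Q 1 v = aeval x (Q v) := by
  have h := congrArg (PowerSeries.coeff 1) (formalInverseSeries_eq x Q v)
  rw [PowerSeries.coeff_mk, map_add, PowerSeries.coeff_succ_X_mul, PowerSeries.coeff_C,
    if_neg one_ne_zero, zero_add, PowerSeries.coeff_zero_eq_constantCoeff_apply, map_aeval] at h
  have hconst : PowerSeries.constantCoeff.comp (algebraMap R A⟦X⟧) = algebraMap R A := by
    ext r; simp [PowerSeries.algebraMap_apply]
  simp [h, hconst, formalInverseCoeff, aeval_def]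

theorem formalInverseCoeff_mem_pow {I : Ideal A} {a : ℕ} (hx : ∀ v, x v ∈ I)
    (hQ : ∀ v, Q v ∈ idealOfVars σ R ^ (a + 1)) (t : ℕ) (v : σ) :
    formalInverseCoeff x Q t v ∈ I ^ (a * t + 1) := by
  induction t using Nat.strong_induction_on generalizing v with
  | _ t ih =>
    rcases t with _ | s
    · simpa [formalInverseCoeff] using hx v
    · have htrunc : ∀ u, CoeffMemPow I a 1
          (PowerSeries.mk fun i => if i ≤ s then formalInverseCoeff x Q i u else 0) := by
        intro u i
        rw [PowerSeries.coeff_mk]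
        split_ifs with hi
        · exact ih i (by omega) u
        · exact zero_mem _
      rw [formalInverseCoeff]
      simpa [mul_add, add_assoc] using coeffMemPow_aeval htrunc (hQ v) s

end FormalInverse

theorem MvPolynomial.map_pow_idealOfVars_le {σ τ R S : Type*} [CommSemiring R] [CommSemiring S]
    (φ : MvPolynomial σ R →+* MvPolynomial τ S) (hφ : ∀ v, φ (X v) ∈ idealOfVars τ S)
    (D : ℕ) :
    (idealOfVars σ R ^ D).map φ ≤ idealOfVars τ S ^ D := by
  rw [Ideal.map_pow, Ideal.map_span]
  refine Ideal.pow_right_mono (Ideal.span_le.2 ?_) D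
  rintro _ ⟨_, ⟨v, rfl⟩, rfl⟩
  exact hφ v

theorem conjP_mem_pow_idealOfVars {n D : ℕ} {p : PolyN n} (hp : p ∈ idealOfVars _ ℂ ^ D) :
    conjP p ∈ idealOfVars _ ℂ ^ D := by
  let φ : PolyN n →+* PolyN n :=
    (MvPolynomial.map (starRingEnd ℂ)).comp (rename Sum.swap).toRingHom
  refine map_pow_idealOfVars_le φ (fun v => Ideal.subset_span ⟨v.swap, ?_⟩) D
    (Ideal.mem_map_of_mem φ hp)
  simp [φ]

/-- Formal inversion of the near-identity transformation `w_k = z_k - α P_k(z)`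
(together with its conjugate equation `w̄_k = z̄_k - α conj(P_k)(z)`): there is a formal power
series `z_v = ∑_t α^t R_{v,t}(w)` with `R_{v,0} = w_v`, `R_{v,1} = P_v` (resp. its conjugate),
each `R_{v,t}` of lower degree at least `(d-1)t + 1`, solving the transformation formally. -/
theorem formal_inversion (n d : ℕ) (hd : 2 ≤ d) (P : Fin n → PolyN n)
    (hP : ∀ k, ∀ m ∈ (P k).support, d ≤ mdeg m) :
    ∃ R : (Fin n ⊕ Fin n) → ℕ → PolyN n,
      (∀ v, R v 0 = X v) ∧
      (∀ k, R (Sum.inl k) 1 = P k) ∧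
      (∀ k, R (Sum.inr k) 1 = conjP (P k)) ∧
      (∀ v t, ∀ m ∈ (R v t).support, (d - 1) * t + 1 ≤ mdeg m) ∧
      (∀ k : Fin n,
        PowerSeries.mk (R (Sum.inl k))
            - PowerSeries.X * MvPolynomial.aeval (fun v => PowerSeries.mk (R v)) (P k)
          = PowerSeries.C (R := PolyN n) (X (Sum.inl k))) ∧
      (∀ k : Fin n,
        PowerSeries.mk (R (Sum.inr k))
            - PowerSeries.X * MvPolynomial.aeval (fun v => PowerSeries.mk (R v)) (conjP (P k))
          = PowerSeries.C (R := PolyN n) (X (Sum.inr k))) := by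
  let Q : Fin n ⊕ Fin n → PolyN n := Sum.elim P (conjP ∘ P)
  have hPmem : ∀ k, P k ∈ idealOfVars _ ℂ ^ (d - 1 + 1) := fun k =>
    (mem_pow_idealOfVars_iff _ _).2 fun m hm => le_trans (by omega) (hP k m hm : d ≤ m.degree)
  have hQ : ∀ v, Q v ∈ idealOfVars _ ℂ ^ (d - 1 + 1)
    | .inl k => hPmem k
    | .inr k => conjP_mem_pow_idealOfVars (hPmem k)
  have hX : ∀ v, (X v : PolyN n) ∈ idealOfVars _ ℂ := fun v => Ideal.subset_span ⟨v, rfl⟩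
  refine ⟨fun v t => formalInverseCoeff X Q t v, fun v => by simp [formalInverseCoeff],
    fun k => (formalInverseCoeff_one X Q _).trans (aeval_X_left_apply _),
    fun k => (formalInverseCoeff_one X Q _).trans (aeval_X_left_apply _),
    fun v t m hm => (mem_pow_idealOfVars_iff _ _).1 (formalInverseCoeff_mem_pow X Q hX hQ t v) m hm,
    fun k => sub_eq_of_eq_add (formalInverseSeries_eq X Q _),
    fun k => sub_eq_of_eq_add (formalInverseSeries_eq X Q _)⟩
end

section
/- Structure of the generated lower-order terms: with P_k a polynomial whose monomial terms all have lower degree at least 2, and β_1,...,β_n complex constants, the polynomial S_k(u) = L^1_k(u) - L^2_k(u), where L^1_k(u) = [P_k || (..., β_j u_j|u_j|^2, ...)](u) and L^2_k(u) = [β_k u_k|u_k|^2 || P](u), can be written as a finite sum of complex scalar multiples of terms of the form u_k^2\overline{R(u)} and |u_j|^2 R(u) (j = 1,...,n), where R(u) ranges over the monomial terms of P_k(u). -/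
open MvPolynomial Complex

lemma conjP_C {n : ℕ} (c : ℂ) : conjP (n := n) (C c) = C (starRingEnd ℂ c) := by
  simp [conjP]

lemma conjP_X {n : ℕ} (i : Fin n ⊕ Fin n) : conjP (X i) = X (Sum.swap i) := by
  simp [conjP]

lemma conjP_mul {n : ℕ} (p q : PolyN n) : conjP (p * q) = conjP p * conjP q := by
  simp [conjP]

lemma conjP_monomial {n : ℕ} (m : (Fin n ⊕ Fin n) →₀ ℕ) (c : ℂ) :
    conjP (monomial m c) = C (starRingEnd ℂ c) * conjP (monomial m 1) := by
  simp [conjP, rename_monomial, map_monomial, C_mul_monomial]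

lemma pd_mul_X {n : ℕ} (m : (Fin n ⊕ Fin n) →₀ ℕ) (c : ℂ) (i : Fin n ⊕ Fin n) :
    pderiv i (monomial m c) * X i = monomial m (c * m i) := by
  rw [pderiv_monomial]
  by_cases h : m i = 0
  · simp [h]
  · have hm : (m - Finsupp.single i 1) + Finsupp.single i 1 = m := by
      ext a
      by_cases ha : a = i
      · subst ha
        simp [Nat.sub_add_cancel (Nat.one_le_iff_ne_zero.mpr h)]
      · simp [Finsupp.single_apply, Ne.symm ha]
    rw [X, monomial_mul, mul_one, hm]

lemma conjP_sum {n : ℕ} {α : Type*} (s : Finset α) (f : α → PolyN n) :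
    conjP (∑ m ∈ s, f m) = ∑ m ∈ s, conjP (f m) := by
  simp [conjP, map_sum]

lemma bracket_sum_left {n : ℕ} {α : Type*} (s : Finset α) (f : α → PolyN n)
    (S : Fin n → PolyN n) :
    bracket (∑ m ∈ s, f m) S = ∑ m ∈ s, bracket (f m) S := by
  unfold bracket
  rw [Finset.sum_comm]
  refine Finset.sum_congr rfl fun j _ => ?_
  simp [map_sum, Finset.sum_mul, Finset.sum_add_distrib]

lemma bracket_monomial {n : ℕ} (m : (Fin n ⊕ Fin n) →₀ ℕ) (c : ℂ) (β : Fin n → ℂ) :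
    bracket (monomial m c) (fun j => C (β j) * X (Sum.inl j) ^ 2 * X (Sum.inr j))
      = ∑ j : Fin n, ((c * β j * m (Sum.inl j) + c * starRingEnd ℂ (β j) * m (Sum.inr j)) •
          (X (Sum.inl j) * X (Sum.inr j) * monomial m 1)) := by
  unfold bracket
  refine Finset.sum_congr rfl fun j _ => ?_
  have h1 : conjP (C (β j) * X (Sum.inl j) ^ 2 * X (Sum.inr j))
      = C (starRingEnd ℂ (β j)) * X (Sum.inr j) ^ 2 * X (Sum.inl j) := by
    simp [conjP_mul, conjP_C, conjP_X, pow_two]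
  rw [h1]
  have t1 : pderiv (Sum.inl j) (monomial m c) * (C (β j) * X (Sum.inl j) ^ 2 * X (Sum.inr j))
      = monomial m (c * m (Sum.inl j)) * (C (β j) * X (Sum.inl j) * X (Sum.inr j)) := by
    rw [← pd_mul_X m c (Sum.inl j)]; ring
  have t2 : pderiv (Sum.inr j) (monomial m c) *
        (C (starRingEnd ℂ (β j)) * X (Sum.inr j) ^ 2 * X (Sum.inl j))
      = monomial m (c * m (Sum.inr j)) * (C (starRingEnd ℂ (β j)) * X (Sum.inr j) * X (Sum.inl j)) := by
    rw [← pd_mul_X m c (Sum.inr j)]; ring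
  rw [t1, t2]
  have hmon : ∀ a : ℂ, (monomial m a : PolyN n) = C a * monomial m 1 := fun a => by
    rw [C_mul_monomial, mul_one]
  rw [hmon (c * (m (Sum.inl j) : ℂ)), hmon (c * (m (Sum.inr j) : ℂ)), smul_eq_C_mul]
  simp only [map_add, map_mul]
  ring

lemma bracket_cubic {n : ℕ} (b : ℂ) (k : Fin n) (P : Fin n → PolyN n) :
    bracket (C b * X (Sum.inl k) ^ 2 * X (Sum.inr k)) P
      = C (2 * b) * (X (Sum.inl k) * X (Sum.inr k)) * P k
        + C b * X (Sum.inl k) ^ 2 * conjP (P k) := by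
  unfold bracket
  rw [Finset.sum_eq_single k]
  · have e1 : pderiv (Sum.inl k) (C b * X (Sum.inl k) ^ 2 * X (Sum.inr k) : PolyN n)
        = C b * (2 * X (Sum.inl k) * X (Sum.inr k)) := by
      simp [pow_two, pderiv_mul, pderiv_C, pderiv_X_self,
        pderiv_X_of_ne (show Sum.inr k ≠ Sum.inl k by simp)]
      ring
    have e2 : pderiv (Sum.inr k) (C b * X (Sum.inl k) ^ 2 * X (Sum.inr k) : PolyN n)
        = C b * X (Sum.inl k) ^ 2 := by
      simp [pow_two, pderiv_mul, pderiv_C, pderiv_X_self,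
        pderiv_X_of_ne (show Sum.inl k ≠ Sum.inr k by simp)]
    have hc : (C (2 * b) : PolyN n) = 2 * C b := by rw [map_mul, map_ofNat]
    rw [e1, e2, hc]; ring
  · intro j _ hj
    have e1 : pderiv (Sum.inl j) (C b * X (Sum.inl k) ^ 2 * X (Sum.inr k) : PolyN n) = 0 := by
      simp [pow_two, pderiv_mul, pderiv_C,
        pderiv_X_of_ne (show Sum.inl k ≠ Sum.inl j by simp [Ne.symm hj]),
        pderiv_X_of_ne (show Sum.inr k ≠ Sum.inl j by simp)]
    have e2 : pderiv (Sum.inr j) (C b * X (Sum.inl k) ^ 2 * X (Sum.inr k) : PolyN n) = 0 := by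
      simp [pow_two, pderiv_mul, pderiv_C,
        pderiv_X_of_ne (show Sum.inl k ≠ Sum.inr j by simp),
        pderiv_X_of_ne (show Sum.inr k ≠ Sum.inr j by simp [Ne.symm hj])]
    rw [e1, e2]; ring
  · simp

/-- Structure of the generated lower-order terms: `S_k = L¹_k - L²_k`, where
`L¹_k = [P_k ‖ (β_j u_j|u_j|²)_j]` and `L²_k = [β_k u_k|u_k|² ‖ P]`, is a ℂ-linear combination
of terms `u_k² conj(R)` and `u_j ū_j R` with `R` ranging over the monomial terms of `P_k`. -/
theorem generated_terms_structure (n : ℕ) (P : Fin n → PolyN n) (β : Fin n → ℂ) (k : Fin n)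
    (hP : ∀ m ∈ (P k).support, 2 ≤ mdeg m) :
    bracket (P k) (fun j => MvPolynomial.C (β j) * (X (Sum.inl j)) ^ 2 * X (Sum.inr j))
        - bracket (MvPolynomial.C (β k) * (X (Sum.inl k)) ^ 2 * X (Sum.inr k)) P
      ∈ Submodule.span ℂ
          {q : PolyN n | ∃ m ∈ (P k).support,
            q = (X (Sum.inl k)) ^ 2 * conjP (monomial m (1 : ℂ)) ∨
            ∃ j : Fin n, q = X (Sum.inl j) * X (Sum.inr j) * monomial m (1 : ℂ)} := by
  classical
  have hrep : ∑ m ∈ (P k).support, monomial m (coeff m (P k)) = P k :=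
    support_sum_monomial_coeff (P k)
  have h1 : bracket (P k) (fun j => C (β j) * X (Sum.inl j) ^ 2 * X (Sum.inr j))
      = ∑ m ∈ (P k).support, ∑ j : Fin n,
          ((coeff m (P k) * β j * m (Sum.inl j)
            + coeff m (P k) * starRingEnd ℂ (β j) * m (Sum.inr j)) •
            (X (Sum.inl j) * X (Sum.inr j) * monomial m 1)) := by
    conv_lhs => rw [← hrep]
    rw [bracket_sum_left]
    exact Finset.sum_congr rfl fun m _ => bracket_monomial m (coeff m (P k)) β
  have h2 : bracket (C (β k) * X (Sum.inl k) ^ 2 * X (Sum.inr k)) P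
      = ∑ m ∈ (P k).support,
          ((2 * β k * coeff m (P k)) • (X (Sum.inl k) * X (Sum.inr k) * monomial m 1)
            + (β k * starRingEnd ℂ (coeff m (P k))) • (X (Sum.inl k) ^ 2 * conjP (monomial m 1))) := by
    rw [bracket_cubic]
    conv_lhs => rw [← hrep]
    rw [conjP_sum, Finset.mul_sum, Finset.mul_sum, ← Finset.sum_add_distrib]
    refine Finset.sum_congr rfl fun m _ => ?_
    rw [conjP_monomial, smul_eq_C_mul, smul_eq_C_mul]
    have hmon : (monomial m (coeff m (P k)) : PolyN n) = C (coeff m (P k)) * monomial m 1 := by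
      rw [C_mul_monomial, mul_one]
    rw [hmon]
    simp only [map_mul, map_ofNat]
    ring
  rw [h1, h2, ← Finset.sum_sub_distrib]
  refine Submodule.sum_mem _ fun m hm => ?_
  refine Submodule.sub_mem _ ?_ (Submodule.add_mem _ ?_ ?_)
  · exact Submodule.sum_mem _ fun j _ => Submodule.smul_mem _ _
      (Submodule.subset_span ⟨m, hm, Or.inr ⟨j, rfl⟩⟩)
  · exact Submodule.smul_mem _ _ (Submodule.subset_span ⟨m, hm, Or.inr ⟨k, rfl⟩⟩)
  · exact Submodule.smul_mem _ _ (Submodule.subset_span ⟨m, hm, Or.inl rfl⟩)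
end

section
/- If a polynomial P_k of lower degree at least 2 satisfies the k-th non-resonance condition (i.e., every monomial term of P_k satisfies it), then the polynomial S_k = L^1_k - L^2_k (defined via the bracket with the cubic terms β_j u_j|u_j|^2) also satisfies the k-th non-resonance condition. -/
open MvPolynomial Complex

/-- The `k`-th non-resonance condition of a polynomial: every monomial term (with exponents
`s_i` on `z_i` and `t_i` on `z̄_i`) satisfies `∑ (s_i - t_i) ω_i - ω_k ≠ 0`. -/
def NonRes {n : ℕ} (ω : Fin n → ℝ) (k : Fin n) (Q : PolyN n) : Prop :=
  ∀ m ∈ Q.support,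
    (∑ i : Fin n, ((m (Sum.inl i) : ℝ) - (m (Sum.inr i) : ℝ)) * ω i) - ω k ≠ 0

/-- weight of an exponent -/
def wgt {n : ℕ} (ω : Fin n → ℝ) (m : Fin n ⊕ Fin n →₀ ℕ) : ℝ :=
  ∑ i : Fin n, ((m (Sum.inl i) : ℝ) - (m (Sum.inr i) : ℝ)) * ω i

lemma wgt_add {n : ℕ} (ω : Fin n → ℝ) (a b : Fin n ⊕ Fin n →₀ ℕ) :
    wgt ω (a + b) = wgt ω a + wgt ω b := by
  simp only [wgt, Finsupp.add_apply, ← Finset.sum_add_distrib]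
  exact Finset.sum_congr rfl fun i _ => by push_cast; ring

lemma wgt_single_inl {n : ℕ} (ω : Fin n → ℝ) (j : Fin n) (c : ℕ) :
    wgt ω (Finsupp.single (Sum.inl j) c) = c * ω j := by
  simp [wgt, Finsupp.single_apply, ite_mul, Finset.sum_ite_eq]

lemma wgt_single_inr {n : ℕ} (ω : Fin n → ℝ) (j : Fin n) (c : ℕ) :
    wgt ω (Finsupp.single (Sum.inr j) c) = -(c * ω j) := by
  simp [wgt, Finsupp.single_apply, ite_mul, Finset.sum_ite_eq]

lemma wgt_swap {n : ℕ} (ω : Fin n → ℝ) (m : Fin n ⊕ Fin n →₀ ℕ) :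
    wgt ω (Finsupp.mapDomain Sum.swap m) = - wgt ω m := by
  have h1 : ∀ i, Finsupp.mapDomain Sum.swap m (Sum.inl i) = m (Sum.inr i) := fun i => by
    simpa using Finsupp.mapDomain_apply (Function.LeftInverse.injective Sum.swap_swap) m (Sum.inr i)
  have h2 : ∀ i, Finsupp.mapDomain Sum.swap m (Sum.inr i) = m (Sum.inl i) := fun i => by
    simpa using Finsupp.mapDomain_apply (Function.LeftInverse.injective Sum.swap_swap) m (Sum.inl i)
  simp only [wgt, h1, h2, ← Finset.sum_neg_distrib]
  exact Finset.sum_congr rfl fun i _ => by ring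

lemma mem_support_pderiv {σ : Type*} [DecidableEq σ] {p : MvPolynomial σ ℂ} {i : σ}
    {m : σ →₀ ℕ} (h : m ∈ (pderiv i p).support) :
    m + Finsupp.single i 1 ∈ p.support := by
  classical
  conv at h => rw [← support_sum_monomial_coeff p]
  rw [map_sum] at h
  simp only [pderiv_monomial] at h
  obtain ⟨d, hd, hmem⟩ := Finset.mem_biUnion.mp (MvPolynomial.support_sum h)
  rcases Finset.mem_singleton.mp (support_monomial_subset hmem) with rfl
  have hdi : d i ≠ 0 := by
    intro h0
    simp [h0, MvPolynomial.support_monomial] at hmem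
  have : d - Finsupp.single i 1 + Finsupp.single i 1 = d := by
    ext a
    by_cases ha : i = a
    · subst ha
      simp [Finsupp.single_apply]
      omega
    · simp [Finsupp.single_apply, ha]
  rwa [this]

lemma cXX_eq {n : ℕ} (c : ℂ) (a b : Fin n ⊕ Fin n) :
    (MvPolynomial.C c * (X a) ^ 2 * X b : MvPolynomial (Fin n ⊕ Fin n) ℂ)
      = monomial (Finsupp.single a 2 + Finsupp.single b 1) c := by
  rw [C_apply, X_pow_eq_monomial, X, monomial_mul, monomial_mul, zero_add, mul_one, mul_one]

lemma mu_sub_l {n : ℕ} (k : Fin n) :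
    (Finsupp.single (Sum.inl k) 2 + Finsupp.single (Sum.inr k) 1 : Fin n ⊕ Fin n →₀ ℕ)
        - Finsupp.single (Sum.inl k) 1
      = Finsupp.single (Sum.inl k) 1 + Finsupp.single (Sum.inr k) 1 := by
  ext a
  rcases a with i | i <;> by_cases h : k = i <;> simp [Finsupp.single_apply, h]

lemma mu_sub_r {n : ℕ} (k : Fin n) :
    (Finsupp.single (Sum.inl k) 2 + Finsupp.single (Sum.inr k) 1 : Fin n ⊕ Fin n →₀ ℕ)
        - Finsupp.single (Sum.inr k) 1
      = Finsupp.single (Sum.inl k) 2 := by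
  ext a
  rcases a with i | i <;> by_cases h : k = i <;> simp [Finsupp.single_apply, h]

lemma mem_support_conjP {n : ℕ} {Q : PolyN n} {m : Fin n ⊕ Fin n →₀ ℕ}
    (h : m ∈ (conjP Q).support) :
    ∃ d ∈ Q.support, m = Finsupp.mapDomain Sum.swap d := by
  classical
  have h1 : m ∈ (rename Sum.swap Q).support := MvPolynomial.support_map_subset _ _ h
  rw [support_rename_of_injective (Function.LeftInverse.injective Sum.swap_swap)] at h1
  obtain ⟨d, hd, rfl⟩ := Finset.mem_image.mp h1
  exact ⟨d, hd, rfl⟩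

/-- If `P_k` (of lower degree at least 2) satisfies the `k`-th non-resonance condition, then so
does `S_k = L¹_k - L²_k`, built from the brackets with the cubic terms `β_j u_j|u_j|²`. -/
theorem nonres_of_generated_terms (n : ℕ) (ω : Fin n → ℝ) (β : Fin n → ℂ)
    (P : Fin n → PolyN n) (k : Fin n)
    (hdeg : ∀ m ∈ (P k).support, 2 ≤ mdeg m)
    (hres : NonRes ω k (P k)) :
    NonRes ω k
      (bracket (P k) (fun j => MvPolynomial.C (β j) * (X (Sum.inl j)) ^ 2 * X (Sum.inr j))
        - bracket (MvPolynomial.C (β k) * (X (Sum.inl k)) ^ 2 * X (Sum.inr k)) P) := by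
  classical
  intro m hm
  show wgt ω m - ω k ≠ 0
  have key : ∃ m₀ ∈ (P k).support,
      wgt ω m = wgt ω m₀ ∨ wgt ω m = 2 * ω k - wgt ω m₀ := by
    rcases Finset.mem_union.mp (MvPolynomial.support_sub _ _ _ hm) with h | h
    · -- L¹ case
      unfold bracket at h
      obtain ⟨j, -, hj⟩ := Finset.mem_biUnion.mp (MvPolynomial.support_sum h)
      beta_reduce at hj
      rcases Finset.mem_union.mp (MvPolynomial.support_add hj) with h1 | h1
      · obtain ⟨d, hd, e, he, rfl⟩ := Finset.mem_add.mp (MvPolynomial.support_mul _ _ h1)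
        rw [cXX_eq] at he
        rcases Finset.mem_singleton.mp (support_monomial_subset he) with rfl
        refine ⟨d + Finsupp.single (Sum.inl j) 1, mem_support_pderiv hd, Or.inl ?_⟩
        rw [wgt_add, wgt_add, wgt_add, wgt_single_inl, wgt_single_inl, wgt_single_inr]
        push_cast; ring
      · have hc : conjP (MvPolynomial.C (β j) * (X (Sum.inl j)) ^ 2 * X (Sum.inr j) : PolyN n)
            = monomial (Finsupp.single (Sum.inr j) 2 + Finsupp.single (Sum.inl j) 1)
                ((starRingEnd ℂ) (β j)) := by
          rw [cXX_eq, conjP, rename_monomial, map_monomial]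
          congr 1
          rw [Finsupp.mapDomain_add, Finsupp.mapDomain_single, Finsupp.mapDomain_single]
          simp
        obtain ⟨d, hd, e, he, rfl⟩ := Finset.mem_add.mp (MvPolynomial.support_mul _ _ h1)
        rw [hc] at he
        rcases Finset.mem_singleton.mp (support_monomial_subset he) with rfl
        refine ⟨d + Finsupp.single (Sum.inr j) 1, mem_support_pderiv hd, Or.inl ?_⟩
        rw [wgt_add, wgt_add, wgt_add, wgt_single_inr, wgt_single_inl, wgt_single_inr]
        push_cast; ring
    · -- L² case
      rw [cXX_eq] at h
      set μ : Fin n ⊕ Fin n →₀ ℕ :=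
        Finsupp.single (Sum.inl k) 2 + Finsupp.single (Sum.inr k) 1 with hμ
      unfold bracket at h
      simp only [pderiv_monomial] at h
      obtain ⟨j, -, hj⟩ := Finset.mem_biUnion.mp (MvPolynomial.support_sum h)
      rcases Finset.mem_union.mp (MvPolynomial.support_add hj) with h1 | h1
      · obtain ⟨e, he, d, hd, rfl⟩ := Finset.mem_add.mp (MvPolynomial.support_mul _ _ h1)
        have hj0 : μ (Sum.inl j) ≠ 0 := by
          intro h0
          rw [h0] at he
          simp [MvPolynomial.support_monomial] at he
        have hkj : k = j := by
          by_contra hne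
          exact hj0 (by simp [hμ, Finsupp.single_apply, hne])
        subst hkj
        rcases Finset.mem_singleton.mp (support_monomial_subset he) with rfl
        refine ⟨d, hd, Or.inl ?_⟩
        rw [wgt_add, hμ, mu_sub_l, wgt_add, wgt_single_inl, wgt_single_inr]
        push_cast; ring
      · obtain ⟨e, he, d, hd, rfl⟩ := Finset.mem_add.mp (MvPolynomial.support_mul _ _ h1)
        have hj0 : μ (Sum.inr j) ≠ 0 := by
          intro h0
          rw [h0] at he
          simp [MvPolynomial.support_monomial] at he
        have hkj : k = j := by
          by_contra hne
          exact hj0 (by simp [hμ, Finsupp.single_apply, hne])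
        subst hkj
        rcases Finset.mem_singleton.mp (support_monomial_subset he) with rfl
        obtain ⟨d₀, hd₀, rfl⟩ := mem_support_conjP hd
        refine ⟨d₀, hd₀, Or.inr ?_⟩
        rw [wgt_add, hμ, mu_sub_r, wgt_single_inl, wgt_swap]
        push_cast; ring
  obtain ⟨m₀, hm₀, hcase⟩ := key
  have h0 : wgt ω m₀ - ω k ≠ 0 := hres m₀ hm₀
  rcases hcase with h | h
  · rw [h]; exact h0
  · rw [h]; intro hz; exact h0 (by linarith)
end
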